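/- arXiv:math/0608561 — 4 statements merged into one kernel-verified Lean document; each statement's English description precedes it below -/
import Mathlib

section
/- Let k be a binomial random variable with parameters n and q ∈ (0,1), and let p = 1 - q. Then Σ_{k=0}^{n} C(n,k) p^{n-k} q^k · log((n+1)/(k+1)) ≤ 1/q. Equivalently, E[log(k+1)] ≥ log(n+1) - 1/q. -/
open Finset in
/-- For `k ~ Bin(n,q)`,
`Σ_{k=0}^n C(n,k) p^{n-k} q^k log((n+1)/(k+1)) ≤ 1/q`; equivalently
`E[log(k+1)] ≥ log(n+1) - 1/q`. -/
theorem binomial_log_lower (n : ℕ) (q : ℝ) (hq0 : 0 < q) (hq1 : q < 1) :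
    (∑ k ∈ range (n + 1),
        (n.choose k : ℝ) * (1 - q) ^ (n - k) * q ^ k *
          Real.log (((n : ℝ) + 1) / ((k : ℝ) + 1)) ≤ 1 / q) ∧
    (Real.log ((n : ℝ) + 1) - 1 / q ≤
      ∑ k ∈ range (n + 1),
        (n.choose k : ℝ) * (1 - q) ^ (n - k) * q ^ k * Real.log ((k : ℝ) + 1)) := by
  set p : ℝ := 1 - q with hp
  have hp0 : 0 < p := by simp [hp]; linarith
  -- probabilities sum to 1
  have hsum : ∑ k ∈ range (n + 1), (n.choose k : ℝ) * p ^ (n - k) * q ^ k = 1 := by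
    have h := add_pow q p n
    rw [show q + p = 1 from by simp [hp], one_pow] at h
    rw [h]
    exact Finset.sum_congr rfl fun k _ => by ring
  -- expectation of (n+1)/(k+1)
  have h2 : ∑ k ∈ range (n + 1),
      (n.choose k : ℝ) * p ^ (n - k) * q ^ k * (((n : ℝ) + 1) / ((k : ℝ) + 1))
      = (1 - p ^ (n + 1)) / q := by
    have hid : ∀ k : ℕ, (n.choose k : ℝ) * (((n : ℝ) + 1) / ((k : ℝ) + 1))
        = ((n + 1).choose (k + 1) : ℝ) := by
      intro k
      have h' : ((n : ℝ) + 1) * (n.choose k : ℝ)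
          = ((n + 1).choose (k + 1) : ℝ) * ((k : ℝ) + 1) := by
        exact_mod_cast Nat.add_one_mul_choose_eq n k
      have hk : ((k : ℝ) + 1) ≠ 0 := by positivity
      field_simp
      linarith [h']
    have hbig : ∑ j ∈ range (n + 2),
        ((n + 1).choose j : ℝ) * p ^ (n + 1 - j) * q ^ j = 1 := by
      have h := add_pow q p (n + 1)
      rw [show q + p = 1 from by simp [hp], one_pow] at h
      rw [h]
      exact Finset.sum_congr rfl fun k _ => by ring
    have hshift : ∑ j ∈ range (n + 2),
        ((n + 1).choose j : ℝ) * p ^ (n + 1 - j) * q ^ j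
        = (∑ k ∈ range (n + 1),
            ((n + 1).choose (k + 1) : ℝ) * p ^ (n - k) * q ^ (k + 1)) + p ^ (n + 1) := by
      rw [Finset.sum_range_succ']
      simp
    have hterm : ∀ k ∈ range (n + 1),
        (n.choose k : ℝ) * p ^ (n - k) * q ^ k * (((n : ℝ) + 1) / ((k : ℝ) + 1))
        = (((n + 1).choose (k + 1) : ℝ) * p ^ (n - k) * q ^ (k + 1)) / q := by
      intro k _
      rw [show (n.choose k : ℝ) * p ^ (n - k) * q ^ k * (((n : ℝ) + 1) / ((k : ℝ) + 1))
          = ((n.choose k : ℝ) * (((n : ℝ) + 1) / ((k : ℝ) + 1))) * p ^ (n - k) * q ^ k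
          from by ring, hid]
      field_simp
      ring
    rw [Finset.sum_congr rfl hterm, ← Finset.sum_div]
    have : ∑ k ∈ range (n + 1),
        ((n + 1).choose (k + 1) : ℝ) * p ^ (n - k) * q ^ (k + 1) = 1 - p ^ (n + 1) := by
      have := hshift.symm.trans hbig
      linarith
    rw [this]
  -- first inequality
  have key : ∑ k ∈ range (n + 1),
      (n.choose k : ℝ) * p ^ (n - k) * q ^ k *
        Real.log (((n : ℝ) + 1) / ((k : ℝ) + 1)) ≤ 1 / q := by
    have h1 : ∀ k ∈ range (n + 1),
        (n.choose k : ℝ) * p ^ (n - k) * q ^ k *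
          Real.log (((n : ℝ) + 1) / ((k : ℝ) + 1))
        ≤ (n.choose k : ℝ) * p ^ (n - k) * q ^ k *
          (((n : ℝ) + 1) / ((k : ℝ) + 1) - 1) := by
      intro k _
      apply mul_le_mul_of_nonneg_left
      · exact Real.log_le_sub_one_of_pos (by positivity)
      · positivity
    calc ∑ k ∈ range (n + 1),
          (n.choose k : ℝ) * p ^ (n - k) * q ^ k *
            Real.log (((n : ℝ) + 1) / ((k : ℝ) + 1))
        ≤ ∑ k ∈ range (n + 1),
          (n.choose k : ℝ) * p ^ (n - k) * q ^ k *
            (((n : ℝ) + 1) / ((k : ℝ) + 1) - 1) := Finset.sum_le_sum h1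
      _ = (∑ k ∈ range (n + 1),
            (n.choose k : ℝ) * p ^ (n - k) * q ^ k * (((n : ℝ) + 1) / ((k : ℝ) + 1)))
          - ∑ k ∈ range (n + 1), (n.choose k : ℝ) * p ^ (n - k) * q ^ k := by
          rw [← Finset.sum_sub_distrib]
          exact Finset.sum_congr rfl fun k _ => by ring
      _ = (1 - p ^ (n + 1)) / q - 1 := by rw [h2, hsum]
      _ ≤ 1 / q := by
          have hpn : 0 ≤ p ^ (n + 1) := by positivity
          have : (1 - p ^ (n + 1)) / q ≤ 1 / q := by
            gcongr
            linarith
          linarith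
  constructor
  · exact key
  · have hlog : ∀ k ∈ range (n + 1),
        (n.choose k : ℝ) * p ^ (n - k) * q ^ k *
          Real.log (((n : ℝ) + 1) / ((k : ℝ) + 1))
        = (n.choose k : ℝ) * p ^ (n - k) * q ^ k * Real.log ((n : ℝ) + 1)
          - (n.choose k : ℝ) * p ^ (n - k) * q ^ k * Real.log ((k : ℝ) + 1) := by
      intro k _
      rw [Real.log_div (by positivity) (by positivity)]
      ring
    rw [Finset.sum_congr rfl hlog, Finset.sum_sub_distrib, ← Finset.sum_mul, hsum,
      one_mul] at key
    linarith
end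

section
/- Define E : ℕ → ℝ by E[0] = 0 and (1 - qⁿ)·E[n] = 1 + Σ_{k=0}^{n-1} C(n,k) p^{n-k} q^k E[k] for n ≥ 1, where p ∈ (0,1) and q = 1-p. Then E[n] ≤ A·log(n+1) for all n, where A = 1/log(2/(1+q)). -/
/-!
The weights `C(n,k) pⁿ⁻ᵏ qᵏ` form the binomial distribution, with total mass `1` and mean `n q`.
Jensen's inequality for the concave `log` gives `∑ₖ C(n,k) pⁿ⁻ᵏ qᵏ log (k+1) ≤ log (n q + 1)`, and
`n q + 1 ≤ (n+1)(1+q)/2` for `n ≥ 1`, which is the bound `log (n+1) - L` with `L = log (2/(1+q))`.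
Strong induction then closes: the term `k = n` of that sum is `qⁿ log (n+1)`, so the recurrence gives
`(1 - qⁿ) E n ≤ 1 + A (log (n+1) - L - qⁿ log (n+1)) = (1 - qⁿ) A log (n+1)`, as `A L = 1`.
-/

open Finset Real

section BinomialWeights

variable {p q : ℝ}

theorem sum_binomial_weights (h : p + q = 1) (n : ℕ) :
    ∑ k ∈ range (n + 1), (n.choose k : ℝ) * p ^ (n - k) * q ^ k = 1 := by
  calc _ = (q + p) ^ n := by rw [add_pow]; exact sum_congr rfl fun k _ => by ring
    _ = 1 := by rw [add_comm, h, one_pow]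

theorem sum_binomial_weights_mul_self (h : p + q = 1) (n : ℕ) :
    ∑ k ∈ range (n + 1), (n.choose k : ℝ) * p ^ (n - k) * q ^ k * k = n * q := by
  cases n with
  | zero => simp
  | succ m =>
    rw [sum_range_succ', Nat.cast_zero, mul_zero, add_zero]
    have term : ∀ i ∈ range (m + 1),
        ((m + 1).choose (i + 1) : ℝ) * p ^ (m + 1 - (i + 1)) * q ^ (i + 1) * ((i + 1 : ℕ) : ℝ) =
          ((m + 1 : ℕ) : ℝ) * q * ((m.choose i : ℝ) * p ^ (m - i) * q ^ i) := by
      intro i _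
      have hchoose : ((m + 1 : ℕ) : ℝ) * m.choose i = (m + 1).choose (i + 1) * ((i + 1 : ℕ) : ℝ) := by
        exact_mod_cast Nat.add_one_mul_choose_eq m i
      rw [Nat.add_sub_add_right, pow_succ]
      linear_combination (-(p ^ (m - i) * q ^ i * q)) * hchoose
    rw [sum_congr rfl term, ← mul_sum, sum_binomial_weights h, mul_one]

theorem sum_binomial_weights_mul_log_le (hp : 0 ≤ p) (hq : 0 ≤ q) (h : p + q = 1) (n : ℕ) :
    ∑ k ∈ range (n + 1), (n.choose k : ℝ) * p ^ (n - k) * q ^ k * log (k + 1) ≤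
      log (n * q + 1) := by
  have hmean : ∑ k ∈ range (n + 1), (n.choose k : ℝ) * p ^ (n - k) * q ^ k * (k + 1) =
      n * q + 1 := by
    simp only [mul_add, mul_one, sum_add_distrib, sum_binomial_weights_mul_self h,
      sum_binomial_weights h]
  have hjensen := strictConcaveOn_log_Ioi.concaveOn.le_map_sum (t := range (n + 1))
    (fun k _ => by positivity) (sum_binomial_weights h n)
    (fun k _ => Set.mem_Ioi.mpr (by positivity : (0 : ℝ) < k + 1))
  simpa only [smul_eq_mul, hmean] using hjensen

end BinomialWeights

theorem log_mul_add_one_le {q : ℝ} (hq0 : 0 ≤ q) (hq1 : q ≤ 1) {n : ℕ} (hn : 1 ≤ n) :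
    log (n * q + 1) ≤ log (n + 1) - log (2 / (1 + q)) := by
  rw [← log_div (by positivity) (by positivity)]
  refine log_le_log (by positivity) ?_
  rw [div_div_eq_mul_div, le_div_iff₀ (by norm_num)]
  have : (1 : ℝ) ≤ n := by exact_mod_cast hn
  nlinarith

theorem hub_upper_bound_step {p q : ℝ} (hp : 0 ≤ p) (hq0 : 0 ≤ q) (hq1 : q < 1) (h : p + q = 1)
    {E : ℕ → ℝ} {n : ℕ} (hn : 1 ≤ n)
    (hrec : (1 - q ^ n) * E n =
      1 + ∑ k ∈ range n, (n.choose k : ℝ) * p ^ (n - k) * q ^ k * E k)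
    (ih : ∀ k < n, E k ≤ (1 / log (2 / (1 + q))) * log (k + 1)) :
    E n ≤ (1 / log (2 / (1 + q))) * log (n + 1) := by
  set L := log (2 / (1 + q))
  have hL : 0 < L := log_pos (by rw [lt_div_iff₀ (by linarith)]; linarith)
  have hjensen := sum_binomial_weights_mul_log_le hp hq0 h n
  rw [sum_range_succ, Nat.choose_self, Nat.sub_self, pow_zero, Nat.cast_one, one_mul,
    one_mul] at hjensen
  have hsum : ∑ k ∈ range n, (n.choose k : ℝ) * p ^ (n - k) * q ^ k * E k ≤
      1 / L * ∑ k ∈ range n, (n.choose k : ℝ) * p ^ (n - k) * q ^ k * log (k + 1) := by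
    rw [mul_sum]
    refine sum_le_sum fun k hk => ?_
    rw [mul_left_comm]
    exact mul_le_mul_of_nonneg_left (ih k (mem_range.mp hk)) (by positivity)
  have hqn : 0 < 1 - q ^ n := by linarith [pow_lt_one₀ hq0 hq1 (by omega : n ≠ 0)]
  refine le_of_mul_le_mul_left ?_ hqn
  calc (1 - q ^ n) * E n
      = 1 + ∑ k ∈ range n, (n.choose k : ℝ) * p ^ (n - k) * q ^ k * E k := hrec
    _ ≤ 1 + 1 / L * (log (n + 1) - L - q ^ n * log (n + 1)) := by
      refine add_le_add_right (hsum.trans (mul_le_mul_of_nonneg_left ?_ (by positivity))) 1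
      linarith [log_mul_add_one_le hq0 hq1.le hn]
    _ = (1 - q ^ n) * (1 / L * log (n + 1)) := by field_simp; ring

open Finset in
/-- Hub recurrence upper bound: `E n ≤ A·log(n+1)` with `A = 1/log(2/(1+q))`. -/
theorem hub_upper_bound (p : ℝ) (hp0 : 0 < p) (hp1 : p < 1) (q : ℝ) (hq : q = 1 - p)
    (E : ℕ → ℝ) (hE0 : E 0 = 0)
    (hrec : ∀ n : ℕ, 1 ≤ n →
      (1 - q ^ n) * E n =
        1 + ∑ k ∈ range n, (n.choose k : ℝ) * p ^ (n - k) * q ^ k * E k) :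
    ∀ n : ℕ, E n ≤ (1 / Real.log (2 / (1 + q))) * Real.log ((n : ℝ) + 1) := by
  have hpq : p + q = 1 := by rw [hq]; ring
  intro n
  induction n using Nat.strong_induction_on with
  | _ n ih =>
    rcases n.eq_zero_or_pos with rfl | hn
    · simp [hE0]
    · exact hub_upper_bound_step hp0.le (by linarith) (by linarith) hpq hn (hrec n hn) ih
end

section
/- Define E : ℕ → ℝ by E[0] = 0 and (1 - qⁿ)·E[n] = 1 + Σ_{k=0}^{n-1} C(n,k) p^{n-k} q^k E[k] for n ≥ 1, where p ∈ (0,1) and q = 1-p. Then E[n] ≥ q·log(n+1) for all n. -/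
/-!
Write `w k = C(n,k) p^(n-k) q^k` for the binomial weights, so that the recurrence reads
`(∑_{k<n} w k) E n = 1 + ∑_{k<n} w k E k` with `∑_{k<n} w k = 1 - q^n`. Strong induction reduces the
claim to `∑_{k<n} w k · q (log (n+1) - log (k+1)) ≤ 1`. Since `log (n+1) - log (k+1) ≤ (n-k)/(k+1)`
and `w k · q (n-k)/(k+1) = p · w (k+1)`, that sum is at most `p ∑_{k<n} w (k+1) ≤ p`.
-/

open Finset

def binomWeight (p q : ℝ) (n k : ℕ) : ℝ := (n.choose k : ℝ) * p ^ (n - k) * q ^ k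

lemma binomWeight_nonneg {p q : ℝ} (hp : 0 ≤ p) (hq : 0 ≤ q) (n k : ℕ) :
    0 ≤ binomWeight p q n k := by
  unfold binomWeight; positivity

lemma sum_range_succ_binomWeight (p q : ℝ) (n : ℕ) :
    ∑ k ∈ range (n + 1), binomWeight p q n k = (p + q) ^ n := by
  rw [add_comm p q, add_pow]
  exact sum_congr rfl fun k _ => by unfold binomWeight; ring

lemma sum_range_binomWeight (p q : ℝ) (n : ℕ) :
    ∑ k ∈ range n, binomWeight p q n k = (p + q) ^ n - q ^ n := by
  rw [← sum_range_succ_binomWeight, sum_range_succ]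
  simp [binomWeight]

lemma binomWeight_mul_eq_mul_binomWeight_succ {p q : ℝ} {n k : ℕ} (hk : k < n) :
    binomWeight p q n k * (q * ((n - k) / (k + 1))) = p * binomWeight p q n (k + 1) := by
  have hchoose : (n.choose k : ℝ) * (n - k) = (n.choose (k + 1)) * (k + 1) := by
    have h : ((n.choose (k + 1) * (k + 1) : ℕ) : ℝ) = ((n.choose k * (n - k) : ℕ) : ℝ) := by
      rw [Nat.choose_succ_right_eq]
    push_cast [Nat.cast_sub hk.le] at h
    exact h.symm
  have hpow : p ^ (n - k) = p * p ^ (n - (k + 1)) := by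
    rw [← pow_succ']; congr 1; omega
  unfold binomWeight
  rw [hpow]
  field_simp
  linear_combination q ^ (k + 1) * p * p ^ (n - (k + 1)) * hchoose

lemma log_sub_log_le_div {a b : ℝ} (ha : 0 < a) (hb : 0 < b) :
    Real.log b - Real.log a ≤ (b - a) / a := by
  rw [← Real.log_div hb.ne' ha.ne', sub_div, div_self ha.ne']
  exact Real.log_le_sub_one_of_pos (div_pos hb ha)

lemma sum_binomWeight_mul_log_sub_le {p q : ℝ} (hp : 0 ≤ p) (hq : 0 ≤ q) (n : ℕ) :
    ∑ k ∈ range n, binomWeight p q n k * (q * Real.log (n + 1) - q * Real.log (k + 1)) ≤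
      p * (p + q) ^ n := by
  have hterm : ∀ k ∈ range n, binomWeight p q n k * (q * Real.log (n + 1) - q * Real.log (k + 1))
      ≤ p * binomWeight p q n (k + 1) := by
    intro k hk
    rw [← binomWeight_mul_eq_mul_binomWeight_succ (mem_range.mp hk), ← mul_sub]
    gcongr
    · exact binomWeight_nonneg hp hq n k
    · exact (log_sub_log_le_div (by positivity) (by positivity)).trans_eq (by ring)
  have hshift : ∑ k ∈ range n, binomWeight p q n (k + 1) ≤ (p + q) ^ n := by
    rw [← sum_range_succ_binomWeight, sum_range_succ']
    linarith [binomWeight_nonneg hp hq n 0]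
  calc _ ≤ ∑ k ∈ range n, p * binomWeight p q n (k + 1) := sum_le_sum hterm
    _ ≤ p * (p + q) ^ n := by rw [← mul_sum]; gcongr

lemma le_of_weighted_recurrence {n : ℕ} {w g E : ℕ → ℝ} (hw : ∀ k ∈ range n, 0 ≤ w k)
    (hpos : 0 < ∑ k ∈ range n, w k)
    (hrec : (∑ k ∈ range n, w k) * E n = 1 + ∑ k ∈ range n, w k * E k)
    (hgap : ∑ k ∈ range n, w k * (g n - g k) ≤ 1) (hle : ∀ k ∈ range n, g k ≤ E k) :
    g n ≤ E n := by
  refine le_of_mul_le_mul_left ?_ hpos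
  have hsplit : (∑ k ∈ range n, w k) * g n =
      ∑ k ∈ range n, w k * (g n - g k) + ∑ k ∈ range n, w k * g k := by
    rw [sum_mul, ← sum_add_distrib]
    exact sum_congr rfl fun k _ => by ring
  have hmono : ∑ k ∈ range n, w k * g k ≤ ∑ k ∈ range n, w k * E k :=
    sum_le_sum fun k hk => mul_le_mul_of_nonneg_left (hle k hk) (hw k hk)
  linarith

open Finset in
/-- Hub recurrence lower bound: `E n ≥ q·log(n+1)`. -/
theorem hub_lower_bound (p : ℝ) (hp0 : 0 < p) (hp1 : p < 1) (q : ℝ) (hq : q = 1 - p)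
    (E : ℕ → ℝ) (hE0 : E 0 = 0)
    (hrec : ∀ n : ℕ, 1 ≤ n →
      (1 - q ^ n) * E n =
        1 + ∑ k ∈ range n, (n.choose k : ℝ) * p ^ (n - k) * q ^ k * E k) :
    ∀ n : ℕ, q * Real.log ((n : ℝ) + 1) ≤ E n := by
  have hpq : p + q = 1 := by linarith
  have hq0 : 0 < q := by linarith
  intro n
  induction n using Nat.strong_induction_on with
  | _ n ih =>
    rcases Nat.eq_zero_or_pos n with rfl | hn
    · simp [hE0]
    have hmass : ∑ k ∈ range n, binomWeight p q n k = 1 - q ^ n := by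
      rw [sum_range_binomWeight, hpq, one_pow]
    refine le_of_weighted_recurrence (w := binomWeight p q n)
      (fun k _ => binomWeight_nonneg hp0.le hq0.le n k) ?_ ?_ ?_ fun k hk => ih k (mem_range.mp hk)
    · rw [hmass, sub_pos]
      exact pow_lt_one₀ hq0.le (by linarith) hn.ne'
    · rw [hmass]
      exact hrec n hn
    · calc _ ≤ p * (p + q) ^ n := sum_binomWeight_mul_log_sub_le hp0.le hq0.le n
        _ ≤ 1 := by rw [hpq, one_pow, mul_one]; exact hp1.le
end

section
/- With τ = ⌈(8/p)(d + log b)⌉ and δ = 1/2, for b independent binomial processes X_i(τ) ~ Bin(τ, p), the probability that min_i X_i(τ) < d is at most e^{-d} ≤ e^{-1}. Consequently the expected time until all b branches of a star graph of depth d are fully infected is at most 8(d + log b)/(p(1 - e^{-1})). -/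
/-!
The lower tail of a binomial count satisfies `Pr[Bin(τ, p) < d] ≤ 2^d (1 - p/2)^τ ≤ e^{d - pτ/2}`,
so once `pτ ≥ 8(d + log b)` the union bound over the `b` branches leaves at most `e^{-3d}`.
For the time `T` at which every branch is fully infected, submultiplicativity of `s ↦ Pr[T > s]`
gives `Pr[T > s] ≤ ε^{⌊s/τ⌋}` with `ε = Pr[T > τ] ≤ e^{-2}`, hence
`E[T] = ∑ₛ Pr[T > s] ≤ τ / (1 - ε)`.
-/

open MeasureTheory ProbabilityTheory Finset
open scoped ENNReal

noncomputable def binomialLowerTail (τ : ℕ) (p : ℝ) (d : ℕ) : ℝ :=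
  ∑ k ∈ range d, (τ.choose k : ℝ) * p ^ k * (1 - p) ^ (τ - k)

theorem sum_range_choose_mul_pow_le {x y : ℝ} (hx : 0 ≤ x) (hy : 0 ≤ y) (d τ : ℕ) :
    ∑ k ∈ range d, (τ.choose k : ℝ) * x ^ k * y ^ (τ - k) ≤ (x + y) ^ τ := by
  rw [add_pow]
  calc ∑ k ∈ range d, (τ.choose k : ℝ) * x ^ k * y ^ (τ - k)
      ≤ ∑ k ∈ range (max d (τ + 1)), (τ.choose k : ℝ) * x ^ k * y ^ (τ - k) :=
        sum_le_sum_of_subset_of_nonneg (range_subset_range.2 (le_max_left _ _))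
          fun _ _ _ => by positivity
    _ = ∑ k ∈ range (τ + 1), x ^ k * y ^ (τ - k) * (τ.choose k : ℝ) := by
        refine (sum_subset (range_subset_range.2 (le_max_right _ _)) fun k _ hk => ?_).symm.trans
          (sum_congr rfl fun _ _ => by ring)
        rw [Nat.choose_eq_zero_of_lt (by simpa using hk), Nat.cast_zero, zero_mul, zero_mul]

theorem binomialLowerTail_le_two_pow_mul {p : ℝ} (hp0 : 0 ≤ p) (hp1 : p ≤ 1) (τ d : ℕ) :
    binomialLowerTail τ p d ≤ 2 ^ d * (1 - p / 2) ^ τ := by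
  calc binomialLowerTail τ p d
      = ∑ k ∈ range d, 2 ^ k * ((τ.choose k : ℝ) * (p / 2) ^ k * (1 - p) ^ (τ - k)) :=
        sum_congr rfl fun k _ => by rw [div_pow]; field_simp
    _ ≤ ∑ k ∈ range d, 2 ^ d * ((τ.choose k : ℝ) * (p / 2) ^ k * (1 - p) ^ (τ - k)) := by
        have : 0 ≤ 1 - p := by linarith
        gcongr with k hk
        · norm_num
        · exact (mem_range.1 hk).le
    _ ≤ 2 ^ d * (p / 2 + (1 - p)) ^ τ := by
        rw [← mul_sum]
        gcongr
        exact sum_range_choose_mul_pow_le (by positivity) (by linarith) d τ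
    _ = 2 ^ d * (1 - p / 2) ^ τ := by ring

theorem binomialLowerTail_le_exp {p : ℝ} (hp0 : 0 ≤ p) (hp1 : p ≤ 1) (τ d : ℕ) :
    binomialLowerTail τ p d ≤ Real.exp (d - p * τ / 2) := by
  have h2 : (2 : ℝ) ≤ Real.exp 1 := by linarith [Real.add_one_le_exp 1]
  have hq : 1 - p / 2 ≤ Real.exp (-(p / 2)) := by linarith [Real.add_one_le_exp (-(p / 2))]
  calc binomialLowerTail τ p d ≤ 2 ^ d * (1 - p / 2) ^ τ :=
        binomialLowerTail_le_two_pow_mul hp0 hp1 τ d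
    _ ≤ Real.exp 1 ^ d * Real.exp (-(p / 2)) ^ τ := by
        have : 0 ≤ 1 - p / 2 := by linarith
        gcongr
    _ = Real.exp (d - p * τ / 2) := by
        rw [← Real.exp_nat_mul, ← Real.exp_nat_mul, ← Real.exp_add]
        ring_nf

theorem card_mul_binomialLowerTail_le_exp {p : ℝ} (hp0 : 0 ≤ p) (hp1 : p ≤ 1) {n τ d : ℕ}
    (hn : 1 ≤ n) (hτ : 8 * (d + Real.log n) ≤ p * τ) :
    n * binomialLowerTail τ p d ≤ Real.exp (-(3 * d)) := by
  have hlog : 0 ≤ Real.log n := Real.log_nonneg (by exact_mod_cast hn)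
  calc (n : ℝ) * binomialLowerTail τ p d ≤ Real.exp (Real.log n) * Real.exp (d - p * τ / 2) := by
        rw [Real.exp_log (by positivity)]
        gcongr
        exact binomialLowerTail_le_exp hp0 hp1 τ d
    _ ≤ Real.exp (-(3 * d)) := by
        rw [← Real.exp_add]
        gcongr
        linarith

theorem measure_exists_lt_le_card_mul_binomialLowerTail {Ω ι : Type*} [MeasurableSpace Ω]
    [Fintype ι] (μ : Measure Ω) [IsFiniteMeasure μ] (Y : ι → Ω → ℕ) {τ : ℕ} {p : ℝ}
    (hY : ∀ i k, (μ {ω | Y i ω = k}).toReal = (τ.choose k : ℝ) * p ^ k * (1 - p) ^ (τ - k))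
    (d : ℕ) :
    μ {ω | ∃ i, Y i ω < d} ≤
      ENNReal.ofReal (Fintype.card ι * binomialLowerTail τ p d) := by
  have hterm : ∀ i k, μ {ω | Y i ω = k} =
      ENNReal.ofReal ((τ.choose k : ℝ) * p ^ k * (1 - p) ^ (τ - k)) := fun i k => by
    rw [← hY i k, ENNReal.ofReal_toReal (measure_ne_top μ _)]
  calc μ {ω | ∃ i, Y i ω < d} ≤ ∑ i, μ (⋃ k ∈ range d, {ω | Y i ω = k}) := by
        refine (measure_mono ?_).trans (measure_iUnion_fintype_le _ _)
        rintro ω ⟨i, hi⟩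
        exact Set.mem_iUnion.2 ⟨i, Set.mem_iUnion₂.2 ⟨_, mem_range.2 hi, rfl⟩⟩
    _ ≤ ∑ _i : ι, ENNReal.ofReal (binomialLowerTail τ p d) := by
        gcongr with i
        refine (measure_biUnion_finset_le _ _).trans_eq ?_
        simp only [hterm, binomialLowerTail,
          ENNReal.ofReal_sum_of_nonneg fun k _ => hY i k ▸ ENNReal.toReal_nonneg]
    _ = _ := by
        rw [sum_const, card_univ, nsmul_eq_mul, ← ENNReal.ofReal_natCast,
          ← ENNReal.ofReal_mul (Nat.cast_nonneg _)]

theorem Nat.lt_sInf_iff_notMem {s : Set ℕ} (hs : s.Nonempty)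
    (hs' : ∀ k₁ k₂ : ℕ, k₁ ≤ k₂ → k₁ ∈ s → k₂ ∈ s) (n : ℕ) : n < sInf s ↔ n ∉ s := by
  conv_rhs => rw [Nat.eq_Ici_of_nonempty_of_upward_closed hs hs']
  simp

theorem ENNReal.tsum_pow_div (q : ℝ≥0∞) {τ : ℕ} (hτ : 0 < τ) :
    ∑' s : ℕ, q ^ (s / τ) = τ * (1 - q)⁻¹ := by
  have : NeZero τ := ⟨hτ.ne'⟩
  calc ∑' s : ℕ, q ^ (s / τ) = ∑' x : ℕ × Fin τ, q ^ x.1 :=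
        (Nat.divModEquiv τ).tsum_eq (fun x : ℕ × Fin τ => q ^ x.1)
    _ = ∑' n : ℕ, τ * q ^ n := by
        rw [ENNReal.tsum_prod (f := fun n (_ : Fin τ) => q ^ n)]
        simp
    _ = τ * (1 - q)⁻¹ := by rw [ENNReal.tsum_mul_left, ENNReal.tsum_geometric]

theorem le_pow_div_of_le_mul {r : ℕ → ℝ≥0∞} (hr : Antitone r) (hr0 : r 0 ≤ 1) {τ : ℕ}
    (hτ : 0 < τ) (hmul : ∀ t, 0 < t → r (t + τ) ≤ r t * r τ) (s : ℕ) :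
    r s ≤ r τ ^ (s / τ) := by
  have hpow : ∀ n, r (n * τ) ≤ r τ ^ n := by
    intro n
    induction n with
    | zero => simpa using hr0
    | succ n ih =>
      rcases Nat.eq_zero_or_pos n with rfl | hn
      · simp
      calc r ((n + 1) * τ) = r (n * τ + τ) := by rw [add_mul, one_mul]
        _ ≤ r (n * τ) * r τ := hmul _ (Nat.mul_pos hn hτ)
        _ ≤ r τ ^ n * r τ := by gcongr
        _ = r τ ^ (n + 1) := (pow_succ _ _).symm
  exact (hr (Nat.div_mul_le_self s τ)).trans (hpow _)

section HittingTime

variable {Ω : Type*} [MeasurableSpace Ω] {μ : Measure Ω}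

theorem lintegral_natCast_eq_tsum_measure_lt {T : Ω → ℕ} (hT : AEMeasurable T μ) :
    ∫⁻ ω, (T ω : ℝ≥0∞) ∂μ = ∑' s : ℕ, μ {ω | s < T ω} := by
  have hmeas : ∀ s : ℕ, NullMeasurableSet {ω | s < T ω} μ := fun s =>
    hT.nullMeasurableSet_preimage (measurableSet_Ioi (a := s))
  have hsum : ∀ ω, (T ω : ℝ≥0∞) = ∑' s : ℕ, {ω' | s < T ω'}.indicator (fun _ => 1) ω := by
    intro ω
    rw [tsum_eq_sum (s := range (T ω)) fun s hs => Set.indicator_of_notMem (by simpa using hs) _,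
      sum_congr rfl fun s hs =>
        Set.indicator_of_mem (s := {ω' | s < T ω'}) (mem_range.1 hs) (fun _ => (1 : ℝ≥0∞))]
    simp
  simp_rw [hsum]
  rw [lintegral_tsum fun s => (aemeasurable_indicator_iff₀ (hmeas s)).2 aemeasurable_const]
  exact tsum_congr fun s => lintegral_indicator_one₀ (hmeas s)

theorem lintegral_natCast_le_of_measure_lt_add_le [IsProbabilityMeasure μ] {T : Ω → ℕ}
    (hT : AEMeasurable T μ) {τ : ℕ} (hτ : 0 < τ)
    (hmul : ∀ t, 0 < t → μ {ω | t + τ < T ω} ≤ μ {ω | t < T ω} * μ {ω | τ < T ω}) :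
    ∫⁻ ω, (T ω : ℝ≥0∞) ∂μ ≤ τ * (1 - μ {ω | τ < T ω})⁻¹ := by
  have hanti : Antitone fun s : ℕ => μ {ω | s < T ω} := fun s t hst =>
    measure_mono fun ω (hω : t < T ω) => (hst.trans_lt hω : s < T ω)
  rw [lintegral_natCast_eq_tsum_measure_lt hT, ← ENNReal.tsum_pow_div _ hτ]
  exact ENNReal.tsum_le_tsum (le_pow_div_of_le_mul hanti prob_le_one hτ hmul)

theorem integral_natCast_le_div_one_sub [IsProbabilityMeasure μ] {T : Ω → ℕ}
    (hT : AEMeasurable T μ) {τ : ℕ} (hτ : 0 < τ)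
    (hmul : ∀ t, 0 < t → μ {ω | t + τ < T ω} ≤ μ {ω | t < T ω} * μ {ω | τ < T ω})
    {ε : ℝ} (hε0 : 0 ≤ ε) (hε1 : ε < 1) (hQ : μ {ω | τ < T ω} ≤ ENNReal.ofReal ε) :
    ∫ ω, (T ω : ℝ) ∂μ ≤ τ / (1 - ε) := by
  have hT' : AEStronglyMeasurable (fun ω => (T ω : ℝ)) μ :=
    (measurable_from_nat (f := (Nat.cast : ℕ → ℝ))).comp_aemeasurable hT |>.aestronglyMeasurable
  rw [integral_eq_lintegral_of_nonneg_ae (.of_forall fun ω => Nat.cast_nonneg _) hT']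
  simp only [ENNReal.ofReal_natCast]
  refine ENNReal.toReal_le_of_le_ofReal (div_nonneg (Nat.cast_nonneg _) (by linarith)) ?_
  calc ∫⁻ ω, (T ω : ℝ≥0∞) ∂μ ≤ τ * (1 - μ {ω | τ < T ω})⁻¹ :=
        lintegral_natCast_le_of_measure_lt_add_le hT hτ hmul
    _ ≤ τ * (1 - ENNReal.ofReal ε)⁻¹ := by gcongr
    _ = ENNReal.ofReal (τ / (1 - ε)) := by
        rw [div_eq_mul_inv, ENNReal.ofReal_mul (Nat.cast_nonneg _), ENNReal.ofReal_natCast,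
          ENNReal.ofReal_inv_of_pos (by linarith), ENNReal.ofReal_sub _ hε0, ENNReal.ofReal_one]

end HittingTime

/-- Rounding `c` up costs at most one unit, which the slack between `e⁻²` and `e⁻¹` absorbs. -/
theorem natCeil_div_one_sub_exp_neg_two_le {c : ℝ} (hc : Real.exp 1 ≤ c) :
    (⌈c⌉₊ : ℝ) / (1 - Real.exp (-2)) ≤ c / (1 - Real.exp (-1)) := by
  set u := Real.exp (-1)
  have hu0 : 0 < u := Real.exp_pos _
  have hcu : 1 ≤ c * u :=
    calc 1 = Real.exp 1 * u := by rw [← Real.exp_add]; norm_num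
      _ ≤ c * u := by gcongr
  have hu1 : u < 1 := Real.exp_lt_one_iff.2 (by norm_num)
  have hu2 : Real.exp (-2) = u * u := by rw [← Real.exp_add]; norm_num
  have hceil : (⌈c⌉₊ : ℝ) ≤ c + 1 := (Nat.ceil_lt_add_one (by linarith [Real.exp_pos 1])).le
  rw [hu2, div_le_div_iff₀ (by nlinarith) (by linarith)]
  nlinarith

theorem star_graph_propagation_general {Ω : Type*} [MeasurableSpace Ω]
    (μ : Measure Ω) [IsProbabilityMeasure μ]
    (b d : ℕ) (hb : 1 ≤ b) (hd : 1 ≤ d) (p : ℝ) (hp0 : 0 < p) (hp1 : p ≤ 1)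
    (X : Fin b → Ω → ℕ → ℕ)
    (hmono : ∀ i ω, Monotone (X i ω))
    (hbinom : ∀ i, ∀ t k : ℕ,
      (μ {ω | X i ω t = k}).toReal = (t.choose k : ℝ) * p ^ k * (1 - p) ^ (t - k))
    (hsub : ∀ t k : ℕ, 0 < t → 0 < k →
      μ {ω | ¬ ∀ i, d ≤ X i ω (t + k)} ≤
        μ {ω | ¬ ∀ i, d ≤ X i ω t} * μ {ω | ¬ ∀ i, d ≤ X i ω k})
    (hhit : ∀ ω, ∃ t, ∀ i, d ≤ X i ω t)
    (hint : Integrable (fun ω => ((sInf {t : ℕ | ∀ i, d ≤ X i ω t} : ℕ) : ℝ)) μ) :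
    (μ {ω | ∃ i, X i ω ⌈(8 / p) * ((d : ℝ) + Real.log b)⌉₊ < d}).toReal ≤
        Real.exp (-(d : ℝ)) ∧
    Real.exp (-(d : ℝ)) ≤ Real.exp (-1) ∧
    ∫ ω, ((sInf {t : ℕ | ∀ i, d ≤ X i ω t} : ℕ) : ℝ) ∂μ ≤
      8 * ((d : ℝ) + Real.log b) / (p * (1 - Real.exp (-1))) := by
  set c := (8 / p) * ((d : ℝ) + Real.log b) with hc
  set T : Ω → ℕ := fun ω => sInf {t : ℕ | ∀ i, d ≤ X i ω t}
  have hd1 : (1 : ℝ) ≤ d := by exact_mod_cast hd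
  have hc8 : 8 ≤ c := by
    have : 1 ≤ (d : ℝ) + Real.log b := by
      linarith [Real.log_nonneg (by exact_mod_cast hb : (1 : ℝ) ≤ b)]
    have : 8 ≤ 8 / p := by rw [le_div_iff₀ hp0]; linarith
    nlinarith
  have hτ : 8 * ((d : ℝ) + Real.log b) ≤ p * ⌈c⌉₊ :=
    calc 8 * ((d : ℝ) + Real.log b) = p * c := by rw [hc]; field_simp
      _ ≤ p * ⌈c⌉₊ := by gcongr; exact Nat.le_ceil c
  have hunfinished : ∀ s, {ω | ∃ i, X i ω s < d} = {ω | s < T ω} := fun s => Set.ext fun ω => by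
    show (∃ i, X i ω s < d) ↔ s < sInf {t | ∀ i, d ≤ X i ω t}
    rw [Nat.lt_sInf_iff_notMem (s := {t | ∀ i, d ≤ X i ω t}) (hhit ω)
      (fun _ _ hle h i => (h i).trans (hmono i ω hle)) s]
    simp
  have hQ : μ {ω | ∃ i, X i ω ⌈c⌉₊ < d} ≤ ENNReal.ofReal (Real.exp (-(3 * d))) := by
    refine (measure_exists_lt_le_card_mul_binomialLowerTail μ (fun i ω => X i ω ⌈c⌉₊)
      (fun i => hbinom i _) d).trans (ENNReal.ofReal_le_ofReal ?_)
    rw [Fintype.card_fin]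
    exact card_mul_binomialLowerTail_le_exp hp0.le hp1 hb hτ
  refine ⟨?_, Real.exp_le_exp.2 (by linarith), ?_⟩
  · refine ENNReal.toReal_le_of_le_ofReal (Real.exp_nonneg _) (hQ.trans ?_)
    exact ENNReal.ofReal_le_ofReal (Real.exp_le_exp.2 (by linarith))
  · simp only [not_forall, not_le, hunfinished] at hsub
    rw [hunfinished] at hQ
    have hT : AEMeasurable T μ := by
      simpa [Function.comp_def] using Nat.measurable_floor.comp_aemeasurable hint.aemeasurable
    calc ∫ ω, (T ω : ℝ) ∂μ ≤ ⌈c⌉₊ / (1 - Real.exp (-2)) :=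
          integral_natCast_le_div_one_sub hT (Nat.ceil_pos.2 (by linarith))
            (fun t ht => hsub t _ ht (Nat.ceil_pos.2 (by linarith))) (Real.exp_nonneg _)
            (Real.exp_lt_one_iff.2 (by norm_num))
            (hQ.trans (ENNReal.ofReal_le_ofReal (Real.exp_le_exp.2 (by linarith))))
      _ ≤ c / (1 - Real.exp (-1)) :=
          natCeil_div_one_sub_exp_neg_two_le (by linarith [Real.exp_one_lt_d9])
      _ = 8 * ((d : ℝ) + Real.log b) / (p * (1 - Real.exp (-1))) := by
          rw [hc]; field_simp

/-- Star graph with `b` branches of depth `d`: each branch's infection count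
`X i · t ~ Bin(t, p)` advances independently. With `τ = ⌈(8/p)(d + log b)⌉`,
`Pr[min_i X i τ < d] ≤ e^{-d} ≤ e^{-1}`, and the expected time until all branches
are fully infected is at most `8(d + log b)/(p(1 - e⁻¹))`. -/
theorem star_graph_propagation {Ω : Type*} [MeasurableSpace Ω]
    (μ : Measure Ω) [IsProbabilityMeasure μ]
    (b d : ℕ) (hb : 1 ≤ b) (hd : 1 ≤ d) (p : ℝ) (hp0 : 0 < p) (hp1 : p ≤ 1)
    (X : Fin b → Ω → ℕ → ℕ)
    (hindep : iIndepFun X μ)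
    (hmono : ∀ i ω, Monotone (X i ω))
    (hbinom : ∀ i, ∀ t k : ℕ,
      (μ {ω | X i ω t = k}).toReal = (t.choose k : ℝ) * p ^ k * (1 - p) ^ (t - k))
    (hsub : ∀ t k : ℕ, 0 < t → 0 < k →
      μ {ω | ¬ ∀ i, d ≤ X i ω (t + k)} ≤
        μ {ω | ¬ ∀ i, d ≤ X i ω t} * μ {ω | ¬ ∀ i, d ≤ X i ω k})
    (hhit : ∀ ω, ∃ t, ∀ i, d ≤ X i ω t)
    (hint : Integrable (fun ω => ((sInf {t : ℕ | ∀ i, d ≤ X i ω t} : ℕ) : ℝ)) μ) :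
    (μ {ω | ∃ i, X i ω ⌈(8 / p) * ((d : ℝ) + Real.log b)⌉₊ < d}).toReal ≤
        Real.exp (-(d : ℝ)) ∧
    Real.exp (-(d : ℝ)) ≤ Real.exp (-1) ∧
    ∫ ω, ((sInf {t : ℕ | ∀ i, d ≤ X i ω t} : ℕ) : ℝ) ∂μ ≤
      8 * ((d : ℝ) + Real.log b) / (p * (1 - Real.exp (-1))) :=
  star_graph_propagation_general μ b d hb hd p hp0 hp1 X hmono hbinom hsub hhit hint
end
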